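/- arXiv:1710.09675 — 4 statements merged into one kernel-verified Lean document; each statement's English description precedes it below -/
import Mathlib

section
/- For every α ≥ 9, the function B_c(u) = 18 u^2 (1-u)^2 + α (u - 1/2)^2 is convex on ℝ. -/
/-!
In the variable `t = u - 1/2` one has `u (1 - u) = 1/4 - t²`, so
`B_c(u) = 18 t⁴ + (α - 9) t² + 9/8`: for `α ≥ 9` a nonnegative combination of even powers of `t`.
-/

open Set

theorem Even.convexOn_sub_pow {𝕜 : Type*} [CommRing 𝕜] [LinearOrder 𝕜] [IsStrictOrderedRing 𝕜]
    {n : ℕ} (hn : Even n) (c : 𝕜) : ConvexOn 𝕜 univ fun x : 𝕜 => (x - c) ^ n := by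
  simpa [Function.comp_def, sub_eq_neg_add] using hn.convexOn_pow.translate_right (-c)

theorem Bc_eq_centered (α u : ℝ) :
    18 * u ^ 2 * (1 - u) ^ 2 + α * (u - 1 / 2) ^ 2
      = 18 * (u - 1 / 2) ^ 4 + (α - 9) * (u - 1 / 2) ^ 2 + 9 / 8 := by
  ring

theorem Bc_convex_of_alpha_ge_nine (α : ℝ) (hα : 9 ≤ α) :
    ConvexOn ℝ Set.univ
      (fun u : ℝ => 18 * u ^ 2 * (1 - u) ^ 2 + α * (u - 1 / 2) ^ 2) := by
  simp_rw [Bc_eq_centered]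
  have quartic := ((by decide : Even 4).convexOn_sub_pow (1 / 2 : ℝ)).smul (c := 18) (by norm_num)
  have quadratic := (even_two.convexOn_sub_pow (1 / 2 : ℝ)).smul (sub_nonneg.2 hα)
  exact (quartic.add quadratic).add_const (9 / 8)
end

section
/- If α < 9, then the function B_c(u) = 18 u^2 (1-u)^2 + α (u - 1/2)^2 is not convex on ℝ; hence α = 9 is the smallest constant making B_c convex. -/
/-! Along `u = 1/2 ± t` one has `B_c(1/2 ± t) = B_c(1/2) + (α - 9) t² + 18 t⁴`, so for `α < 9` and
small `t > 0` the value at the midpoint `1/2` exceeds the average of the values at `1/2 ± t`,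
which contradicts (midpoint) convexity. -/

open Set

theorem ConvexOn.le_avg_sub_add {s : Set ℝ} {f : ℝ → ℝ} (hf : ConvexOn ℝ s f) {x t : ℝ}
    (hl : x - t ∈ s) (hr : x + t ∈ s) : f x ≤ (f (x - t) + f (x + t)) / 2 := by
  have key := hf.2 hl hr (by norm_num : (0 : ℝ) ≤ 1 / 2) (by norm_num : (0 : ℝ) ≤ 1 / 2)
    (by norm_num)
  have hmid : (1 / 2 : ℝ) • (x - t) + (1 / 2 : ℝ) • (x + t) = x := by
    simp only [smul_eq_mul]; ring
  rw [hmid, smul_eq_mul, smul_eq_mul] at key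
  linarith

noncomputable def Bc (α u : ℝ) : ℝ := 18 * u ^ 2 * (1 - u) ^ 2 + α * (u - 1 / 2) ^ 2

theorem Bc_half_add (α t : ℝ) :
    Bc α (1 / 2 + t) = Bc α (1 / 2) + (α - 9) * t ^ 2 + 18 * (t ^ 2) ^ 2 := by
  unfold Bc; ring

theorem Bc_half_sub (α t : ℝ) :
    Bc α (1 / 2 - t) = Bc α (1 / 2) + (α - 9) * t ^ 2 + 18 * (t ^ 2) ^ 2 := by
  unfold Bc; ring

theorem Bc_not_convex_of_alpha_lt_nine (α : ℝ) (hα : α < 9) :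
    ¬ ConvexOn ℝ Set.univ
      (fun u : ℝ => 18 * u ^ 2 * (1 - u) ^ 2 + α * (u - 1 / 2) ^ 2) := by
  change ¬ ConvexOn ℝ univ (Bc α)
  intro hconv
  -- then `18 t⁴ = (9 - α) t² / 2` is only half of the negative term `(α - 9) t²`
  set t := √((9 - α) / 36)
  have ht : t ^ 2 = (9 - α) / 36 := Real.sq_sqrt (by linarith)
  have hmid := hconv.le_avg_sub_add (x := 1 / 2) (t := t) (mem_univ _) (mem_univ _)
  rw [Bc_half_sub, Bc_half_add, ht] at hmid
  nlinarith
end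

section
/- Let E = E_c - E_e with E_c, E_e : ℝ^n → ℝ convex and differentiable, and suppose u, v ∈ ℝ^n satisfy (v - u)/τ = -∇E_c(v) + ∇E_e(u) for some τ > 0. Then E(v) ≤ E(u). -/
/-! Treating `Ec` implicitly and `Ee` explicitly makes the first-order convexity bounds, taken at
`v` for `Ec` and at `u` for `Ee`, combine to `E v - E u ≤ ⟪∇Ec v - ∇Ee u, v - u⟫`, and the scheme
turns the right-hand side into `-‖v - u‖² / τ ≤ 0`. -/

open RealInnerProductSpace Set

section FirstOrderCondition

variable {E : Type*} [NormedAddCommGroup E] {s : Set E} {f : E → ℝ} {x y : E}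

/-- Restrict to the segment `t ↦ lineMap x y t`, a convex function of one variable on `[0, 1]`,
whose derivative at `0` is at most its secant slope `f y - f x`. -/
theorem ConvexOn.add_fderiv_sub_le [NormedSpace ℝ E] {f' : E →L[ℝ] ℝ} (hf : ConvexOn ℝ s f)
    (hx : x ∈ s) (hy : y ∈ s) (hf' : HasFDerivAt f f' x) :
    f x + f' (y - x) ≤ f y := by
  have hline : ConvexOn ℝ (Icc 0 1) (f ∘ AffineMap.lineMap (k := ℝ) x y) :=
    (hf.comp_affineMap _).subset (hf.1.mapsTo_lineMap hx hy) (convex_Icc 0 1)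
  have hderiv : HasDerivAt (f ∘ AffineMap.lineMap (k := ℝ) x y) (f' (y - x)) 0 := by
    have hf'0 : HasFDerivAt f f' (AffineMap.lineMap x y (0 : ℝ)) := by simpa using hf'
    exact hf'0.comp_hasDerivAt 0 AffineMap.hasDerivAt_lineMap
  have hslope := hline.le_slope_of_hasDerivAt (left_mem_Icc.2 zero_le_one)
    (right_mem_Icc.2 zero_le_one) one_pos hderiv
  simp only [slope_def_field, Function.comp_apply, AffineMap.lineMap_apply_one,
    AffineMap.lineMap_apply_zero, sub_zero, div_one] at hslope
  linarith

theorem ConvexOn.add_inner_gradient_sub_le [InnerProductSpace ℝ E] [CompleteSpace E] {g : E}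
    (hf : ConvexOn ℝ s f) (hx : x ∈ s) (hy : y ∈ s) (hg : HasGradientAt f g x) :
    f x + ⟪g, y - x⟫ ≤ f y := by
  simpa using hf.add_fderiv_sub_le hx hy hg.hasFDerivAt

end FirstOrderCondition

theorem sub_le_sub_add_inner_of_convexOn {E : Type*} [NormedAddCommGroup E]
    [InnerProductSpace ℝ E] [CompleteSpace E] {s : Set E} {Ec Ee : E → ℝ} {gc ge u v : E}
    (hEc : ConvexOn ℝ s Ec) (hEe : ConvexOn ℝ s Ee) (hu : u ∈ s) (hv : v ∈ s)
    (hgc : HasGradientAt Ec gc v) (hge : HasGradientAt Ee ge u) :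
    Ec v - Ee v ≤ Ec u - Ee u + ⟪gc - ge, v - u⟫ := by
  have hc := hEc.add_inner_gradient_sub_le hv hu hgc
  have he := hEe.add_inner_gradient_sub_le hu hv hge
  have hflip : ⟪gc, u - v⟫ = -⟪gc, v - u⟫ := by rw [← inner_neg_right, neg_sub]
  rw [inner_sub_left]
  linarith

theorem convex_splitting_energy_stable (n : ℕ)
    (Ec Ee : EuclideanSpace ℝ (Fin n) → ℝ)
    (Gc Ge : EuclideanSpace ℝ (Fin n) → EuclideanSpace ℝ (Fin n))
    (hEc : ConvexOn ℝ Set.univ Ec) (hEe : ConvexOn ℝ Set.univ Ee)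
    (hGc : ∀ x, HasGradientAt Ec (Gc x) x)
    (hGe : ∀ x, HasGradientAt Ee (Ge x) x)
    (u v : EuclideanSpace ℝ (Fin n)) (τ : ℝ) (hτ : 0 < τ)
    (hscheme : τ⁻¹ • (v - u) = -Gc v + Ge u) :
    Ec v - Ee v ≤ Ec u - Ee u := by
  have hstep := sub_le_sub_add_inner_of_convexOn hEc hEe (mem_univ u) (mem_univ v)
    (hGc v) (hGe u)
  have hgrad : Gc v - Ge u = -(τ⁻¹ • (v - u)) := by rw [hscheme]; abel
  have hdissipation : ⟪Gc v - Ge u, v - u⟫ = -(τ⁻¹ * ‖v - u‖ ^ 2) := by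
    rw [hgrad, inner_neg_left, real_inner_smul_left, real_inner_self_eq_norm_sq]
  have : 0 ≤ τ⁻¹ * ‖v - u‖ ^ 2 := by positivity
  linarith
end

section
/- Let E = E_c - E_e with E_c, E_e : ℝ^n → ℝ convex and differentiable, let A be a symmetric positive semidefinite n×n matrix, and suppose u, v ∈ ℝ^n satisfy (v - u)/τ = -A(∇E_c(v) - ∇E_e(u)) for some τ > 0. Then E(v) ≤ E(u). -/
/-!
Convexity of `E_c` and `E_e` bounds the energy change by the gradients at the two time levels:
`E_c(v) - E_c(u) ≤ ⟪∇E_c(v), v - u⟫` and `E_e(v) - E_e(u) ≥ ⟪∇E_e(u), v - u⟫`, so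
`E(v) - E(u) ≤ ⟪w, v - u⟫` with `w = ∇E_c(v) - ∇E_e(u)`. The scheme gives `v - u = -τ A w`,
and `⟪w, -τ A w⟫ ≤ 0` since `A` is positive semidefinite.
-/

open RealInnerProductSpace Set AffineMap

section FirstOrder

variable {E : Type*} [NormedAddCommGroup E] [NormedSpace ℝ E] {f : E → ℝ} {x : E}

theorem ConvexOn.le_sub_of_hasFDerivAt {f' : E →L[ℝ] ℝ} (hf : ConvexOn ℝ univ f)
    (hf' : HasFDerivAt f f' x) (y : E) : f' (y - x) ≤ f y - f x := by
  have hline : ConvexOn ℝ univ (f ∘ lineMap (k := ℝ) x y) := hf.comp_affineMap _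
  have hderiv : HasDerivAt (f ∘ lineMap (k := ℝ) x y) (f' (y - x)) 0 := by
    have hx : lineMap x y (0 : ℝ) = x := lineMap_apply_zero x y
    exact (hx ▸ hf').comp_hasDerivAt 0 hasDerivAt_lineMap
  simpa [slope] using hline.le_slope_of_hasDerivAt trivial trivial zero_lt_one hderiv

end FirstOrder

section Gradient

variable {F : Type*} [NormedAddCommGroup F] [InnerProductSpace ℝ F] [CompleteSpace F]

theorem ConvexOn.inner_le_sub_of_hasGradientAt {f : F → ℝ} {g x : F} (hf : ConvexOn ℝ univ f)
    (hg : HasGradientAt f g x) (y : F) : ⟪g, y - x⟫ ≤ f y - f x := by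
  simpa using hf.le_sub_of_hasFDerivAt hg.hasFDerivAt y

theorem ConvexOn.sub_le_sub_of_inner_sub_gradient_nonneg {Ec Ee : F → ℝ} {gc ge u v : F}
    (hEc : ConvexOn ℝ univ Ec) (hEe : ConvexOn ℝ univ Ee)
    (hgc : HasGradientAt Ec gc v) (hge : HasGradientAt Ee ge u)
    (h : 0 ≤ ⟪gc - ge, u - v⟫) : Ec v - Ee v ≤ Ec u - Ee u := by
  have hc := hEc.inner_le_sub_of_hasGradientAt hgc u
  have he := hEe.inner_le_sub_of_hasGradientAt hge v
  have hsplit : ⟪gc - ge, u - v⟫ = ⟪gc, u - v⟫ + ⟪ge, v - u⟫ := by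
    simp only [inner_sub_left, inner_sub_right]
    ring
  linarith

end Gradient

theorem convex_splitting_conserved_energy_stable_general (n : ℕ)
    (Ec Ee : EuclideanSpace ℝ (Fin n) → ℝ)
    (Gc Ge : EuclideanSpace ℝ (Fin n) → EuclideanSpace ℝ (Fin n))
    (hEc : ConvexOn ℝ Set.univ Ec) (hEe : ConvexOn ℝ Set.univ Ee)
    (hGc : ∀ x, HasGradientAt Ec (Gc x) x)
    (hGe : ∀ x, HasGradientAt Ee (Ge x) x)
    (A : EuclideanSpace ℝ (Fin n) →ₗ[ℝ] EuclideanSpace ℝ (Fin n))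
    (hApsd : ∀ x, 0 ≤ ⟪A x, x⟫)
    (u v : EuclideanSpace ℝ (Fin n)) (τ : ℝ) (hτ : 0 < τ)
    (hscheme : τ⁻¹ • (v - u) = -(A (Gc v - Ge u))) :
    Ec v - Ee v ≤ Ec u - Ee u := by
  refine hEc.sub_le_sub_of_inner_sub_gradient_nonneg hEe (hGc v) (hGe u) ?_
  set w := Gc v - Ge u
  have hstep : u - v = τ • A w := by
    rw [inv_smul_eq_iff₀ hτ.ne'] at hscheme
    rw [← neg_sub, hscheme, smul_neg, neg_neg]
  rw [hstep, inner_smul_right, real_inner_comm]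
  exact mul_nonneg hτ.le (hApsd w)

theorem convex_splitting_conserved_energy_stable (n : ℕ)
    (Ec Ee : EuclideanSpace ℝ (Fin n) → ℝ)
    (Gc Ge : EuclideanSpace ℝ (Fin n) → EuclideanSpace ℝ (Fin n))
    (hEc : ConvexOn ℝ Set.univ Ec) (hEe : ConvexOn ℝ Set.univ Ee)
    (hGc : ∀ x, HasGradientAt Ec (Gc x) x)
    (hGe : ∀ x, HasGradientAt Ee (Ge x) x)
    (A : EuclideanSpace ℝ (Fin n) →ₗ[ℝ] EuclideanSpace ℝ (Fin n))
    (hAsymm : ∀ x y, ⟪A x, y⟫ = ⟪x, A y⟫)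
    (hApsd : ∀ x, 0 ≤ ⟪A x, x⟫)
    (u v : EuclideanSpace ℝ (Fin n)) (τ : ℝ) (hτ : 0 < τ)
    (hscheme : τ⁻¹ • (v - u) = -(A (Gc v - Ge u))) :
    Ec v - Ee v ≤ Ec u - Ee u :=
  convex_splitting_conserved_energy_stable_general n Ec Ee Gc Ge hEc hEe hGc hGe A hApsd u v τ hτ
    hscheme
end
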